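/- In the two-level setup, two-level conditional controllability is closed under arbitrary unions: if (K_α)_{α∈I} is a family of prefix-closed sublanguages of ‖_{i=1}^n L_i, each two-level conditionally controllable with respect to L_1,…,L_n, the coordinators L_{k_j}, and A_u, then ∪_{α∈I} K_α is two-level conditionally controllable with respect to the same data. Consequently, for every prefix-closed language K ⊆ ‖_{i=1}^n L_i, the supremal two-level conditionally controllable sublanguage of K exists (namely the union of all two-level conditionally controllable sublanguages of K). -/

import Mathlib

variable {α : Type*}

/-- The natural projection onto subalphabet `B`: erases events not in `B`. -/
noncomputable def proj (B : Set α) (w : List α) : List α :=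
  w.filter fun a => @decide (a ∈ B) (Classical.propDecidable _)

/-- Words over alphabet `A`. -/
def Words (A : Set α) : Set (List α) := {w | ∀ a ∈ w, a ∈ A}

/-- Synchronous product of a family of languages `M i` over alphabets `B i`:
`‖_i M i = ⋂_i P_{B i}⁻¹ (M i)`, a language over `⋃ i, B i`. -/
def SyncProd {ι : Type*} (B : ι → Set α) (M : ι → Set (List α)) : Set (List α) :=
  {w | w ∈ Words (⋃ i, B i) ∧ ∀ i, proj (B i) w ∈ M i}

/-- Binary synchronous product of `M₁` over `B₁` and `M₂` over `B₂`. -/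
def sync2 (B₁ B₂ : Set α) (M₁ M₂ : Set (List α)) : Set (List α) :=
  {w | w ∈ Words (B₁ ∪ B₂) ∧ proj B₁ w ∈ M₁ ∧ proj B₂ w ∈ M₂}

/-- `K` is controllable with respect to `L` and uncontrollable events `Au`:
`K·Au ∩ L ⊆ K`. -/
def Controllable (K L : Set (List α)) (Au : Set α) : Prop :=
  ∀ s ∈ K, ∀ a ∈ Au, s ++ [a] ∈ L → s ++ [a] ∈ K

def PrefixClosed (L : Set (List α)) : Prop :=
  ∀ w ∈ L, ∀ v : List α, v <+: w → v ∈ L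

/-- The projection onto `B` is an `L`-observer. -/
def IsObserver (B : Set α) (L : Set (List α)) : Prop :=
  ∀ t ∈ proj B '' L, ∀ s ∈ L, proj B s <+: t →
    ∃ u : List α, s ++ u ∈ L ∧ proj B (s ++ u) = t

/-- The projection onto `Ao` is output control consistent (OCC) for `L`
(with uncontrollable events `Au`). -/
def OCC (Ao Au : Set α) (L : Set (List α)) : Prop :=
  ∀ s ∈ L, ∀ (mid : List α) (σk : α), σk ∈ Ao → (∀ a ∈ mid, a ∉ Ao) →
    (s = mid ++ [σk] ∨
      ∃ (s' : List α) (σ' : α), σ' ∈ Ao ∧ s = s' ++ σ' :: (mid ++ [σk])) →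
    σk ∈ Au → ∀ a ∈ mid, a ∈ Au

/-- Supremal controllable sublanguage of `K` w.r.t. `L` and `Au`:
the union of all sublanguages of `K` controllable w.r.t. `L` and `Au`. -/
def supC (K L : Set (List α)) (Au : Set α) : Set (List α) :=
  ⋃₀ {M | M ⊆ K ∧ Controllable M L Au}

/-- C&P coobservability of `K'` w.r.t. plant `L`, observation alphabets `Bo i`
and local controllable alphabets `Bc i`. -/
def Coobservable {ι : Type*} (Bo Bc : ι → Set α) (L K' : Set (List α)) : Prop :=
  ∀ s ∈ K', ∀ a ∈ ⋃ i, Bc i, s ++ [a] ∈ L → s ++ [a] ∉ K' →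
    ∃ i, a ∈ Bc i ∧
      ∀ s' ∈ Words (⋃ j, Bo j), proj (Bo i) s' = proj (Bo i) s → s' ++ [a] ∉ K'

/-- The closed-loop language of supervisor `S` over plant `M`:
the smallest language containing `ε` and closed under enabled extensions in `M`. -/
inductive InClosedLoop (S : List α → Set α) (M : Set (List α)) : List α → Prop
  | nil : InClosedLoop S M []
  | step {s : List α} {a : α} : InClosedLoop S M s → s ++ [a] ∈ M → a ∈ S s →
      InClosedLoop S M (s ++ [a])

def ClosedLoop (S : List α → Set α) (M : Set (List α)) : Set (List α) :=
  {w | InClosedLoop S M w}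

/-- A supervisor over alphabet `B` whose control patterns contain the
uncontrollable events `Bu` (i.e. `Bu ⊆ S s ⊆ B`). -/
def IsSupervisor (B Bu : Set α) (S : List α → Set α) : Prop :=
  ∀ s : List α, Bu ⊆ S s ∧ S s ⊆ B

/-- The coordinator language `L_k = ‖_{i=1}^n P_k (L i)` (each `P_k(L i)` being a
language over `A i ∩ Ak`). -/
def coordLang {n : ℕ} (A : Fin n → Set α) (Ak : Set α) (L : Fin n → Set (List α)) :
    Set (List α) :=
  SyncProd (fun i => A i ∩ Ak) (fun i => proj Ak '' L i)

/-- Two-level conditional controllability of `K` w.r.t. plants `L i` over `A i`,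
grouping `g`, group-coordinator alphabets `Akj j` (coordinators
`L_{k_j} = ‖_i P_{k_j}(L i)`), and uncontrollable events `Au`. -/
def TwoLevelCC {n m : ℕ} (A : Fin n → Set α) (g : Fin n → Fin m) (Akj : Fin m → Set α)
    (L : Fin n → Set (List α)) (Au : Set α) (K : Set (List α)) : Prop :=
  (∀ j : Fin m, Controllable (proj (Akj j) '' K) (coordLang A (Akj j) L) (Akj j ∩ Au)) ∧
  (∀ i : Fin n, Controllable (proj (A i ∪ Akj (g i)) '' K)
      (sync2 (A i) (Akj (g i)) (L i) (proj (Akj (g i)) '' K))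
      ((A i ∪ Akj (g i)) ∩ Au))

/-- `supC_{k_j}`. -/
def supCk {n : ℕ} (A : Fin n → Set α) (Akj : Set α) (L : Fin n → Set (List α))
    (Au : Set α) (K : Set (List α)) : Set (List α) :=
  supC (proj Akj '' K) (coordLang A Akj L) (Akj ∩ Au)

/-- `supC_{i+k_j}` (with `j = g i`). -/
def supCik {n m : ℕ} (A : Fin n → Set α) (g : Fin n → Fin m) (Akj : Fin m → Set α)
    (L : Fin n → Set (List α)) (Au : Set α) (K : Set (List α)) (i : Fin n) :
    Set (List α) :=
  supC (proj (A i ∪ Akj (g i)) '' K)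
    (sync2 (A i) (Akj (g i)) (L i) (supCk A (Akj (g i)) L Au K))
    ((A i ∪ Akj (g i)) ∩ Au)

/-- Two-level conditional decomposability of `K` w.r.t. `(A i)`, the high-level
coordinator alphabet `Ak` and the low-level coordinator alphabets `Akj j`. -/
def TwoLevelCD {n m : ℕ} (A : Fin n → Set α) (g : Fin n → Fin m) (Ak : Set α)
    (Akj : Fin m → Set α) (K : Set (List α)) : Prop :=
  K = SyncProd (fun r : Fin m => (⋃ i ∈ {i | g i = r}, A i) ∪ Ak)
        (fun r => proj ((⋃ i ∈ {i | g i = r}, A i) ∪ Ak) '' K) ∧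
  ∀ r : Fin m, proj ((⋃ i ∈ {i | g i = r}, A i) ∪ Ak) '' K =
    SyncProd (fun i : {i : Fin n // g i = r} => A i.1 ∪ Akj r)
      (fun i => proj (A i.1 ∪ Akj r) '' K)

/-- The supremal two-level conditionally controllable sublanguage of `K`. -/
def supTwoCC {n m : ℕ} (A : Fin n → Set α) (g : Fin n → Fin m) (Akj : Fin m → Set α)
    (L : Fin n → Set (List α)) (Au : Set α) (K : Set (List α)) : Set (List α) :=
  ⋃₀ {K' | K' ⊆ K ∧ PrefixClosed K' ∧ TwoLevelCC A g Akj L Au K'}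

/-! Controllability is closed under unions for a fixed plant, which settles the first
condition. The second is subtler: the plant `L i ‖ P_{k_j}(K)` of the second condition grows
with `K`. What makes a union still work is the first condition: if `s ∈ P_{i+k_j}(K_b)` and
`a ∈ A_{k_j}` is uncontrollable with `P_{k_j}(s)a ∈ P_{k_j}(⋃ K)`, then `P_{k_j}(s)a` lies
in `L_{k_j}` (because `⋃ K ⊆ ‖ L i`), hence already in `P_{k_j}(K_b)`; so `s·a` lies in the
smaller plant `L i ‖ P_{k_j}(K_b)`, for which `K_b` is controllable. -/

attribute [local instance] Classical.propDecidable

lemma proj_append (B : Set α) (s t : List α) : proj B (s ++ t) = proj B s ++ proj B t :=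
  List.filter_append s t

lemma proj_singleton_of_mem {B : Set α} {a : α} (h : a ∈ B) : proj B [a] = [a] := by
  simp [proj, h]

lemma proj_singleton_of_notMem {B : Set α} {a : α} (h : a ∉ B) : proj B [a] = [] := by
  simp [proj, h]

lemma mem_proj {B : Set α} {a : α} {w : List α} : a ∈ proj B w ↔ a ∈ w ∧ a ∈ B := by
  simp [proj]

lemma proj_proj (B C : Set α) (w : List α) : proj C (proj B w) = proj (B ∩ C) w := by
  simp only [proj, List.filter_filter, Set.mem_inter_iff, Bool.decide_and, Bool.and_comm]

lemma proj_proj_of_subset {B C : Set α} (h : C ⊆ B) (w : List α) :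
    proj C (proj B w) = proj C w := by
  rw [proj_proj, Set.inter_eq_right.mpr h]

lemma image_proj_subset_coordLang {n : ℕ} (A : Fin n → Set α) (Ak : Set α)
    (L : Fin n → Set (List α)) {K : Set (List α)} (hK : K ⊆ SyncProd A L) :
    proj Ak '' K ⊆ coordLang A Ak L := by
  rintro _ ⟨w, hw, rfl⟩
  obtain ⟨hwA, hwL⟩ := hK hw
  refine ⟨fun a ha => ?_, fun i => ⟨proj (A i) w, hwL i, ?_⟩⟩
  · obtain ⟨haw, haAk⟩ := mem_proj.mp ha
    obtain ⟨i, hai⟩ := Set.mem_iUnion.mp (hwA a haw)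
    exact Set.mem_iUnion.mpr ⟨i, hai, haAk⟩
  · rw [proj_proj, proj_proj, Set.inter_eq_right.mpr Set.inter_subset_right]

lemma controllable_iUnion {ι : Sort*} {K : ι → Set (List α)} {L : Set (List α)} {Au : Set α}
    (hK : ∀ b, Controllable (K b) L Au) : Controllable (⋃ b, K b) L Au := by
  intro s hs a ha hsa
  obtain ⟨b, hsb⟩ := Set.mem_iUnion.mp hs
  exact Set.mem_iUnion.mpr ⟨b, hK b s hsb a ha hsa⟩

lemma Controllable.sync2_of_le_coord {B₁ B₂ Au : Set α} {H M N N' Lk : Set (List α)}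
    (hH : Controllable H (sync2 B₁ B₂ M N) ((B₁ ∪ B₂) ∩ Au))
    (hHN : ∀ s ∈ H, proj B₂ s ∈ N) (hN : Controllable N Lk (B₂ ∩ Au)) (hN' : N' ⊆ Lk) :
    Controllable H (sync2 B₁ B₂ M N') ((B₁ ∪ B₂) ∩ Au) := by
  rintro s hs a ha ⟨hsaW, hsaM, hsaN'⟩
  refine hH s hs a ha ⟨hsaW, hsaM, ?_⟩
  rw [proj_append] at hsaN' ⊢
  by_cases haB₂ : a ∈ B₂
  · rw [proj_singleton_of_mem haB₂] at hsaN' ⊢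
    exact hN _ (hHN s hs) a ⟨haB₂, ha.2⟩ (hN' hsaN')
  · rw [proj_singleton_of_notMem haB₂, List.append_nil]
    exact hHN s hs

theorem TwoLevelCC.iUnion {n m : ℕ} {A : Fin n → Set α} {g : Fin n → Fin m}
    {Akj : Fin m → Set α} {L : Fin n → Set (List α)} {Au : Set α} {ι : Sort*}
    {K : ι → Set (List α)} (hKL : ∀ b, K b ⊆ SyncProd A L)
    (hK : ∀ b, TwoLevelCC A g Akj L Au (K b)) :
    TwoLevelCC A g Akj L Au (⋃ b, K b) := by
  refine ⟨fun j => ?_, fun i => ?_⟩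
  · rw [Set.image_iUnion]
    exact controllable_iUnion fun b => (hK b).1 j
  · rw [Set.image_iUnion]
    refine controllable_iUnion fun b => ((hK b).2 i).sync2_of_le_coord ?_ ((hK b).1 (g i)) ?_
    · rintro _ ⟨w, hw, rfl⟩
      exact ⟨w, hw, (proj_proj_of_subset Set.subset_union_right w).symm⟩
    · exact image_proj_subset_coordLang A _ L (Set.iUnion_subset hKL)

theorem stmt_9_general (n m : ℕ) (A : Fin n → Set α) (g : Fin n → Fin m)
    (Akj : Fin m → Set α) (Au : Set α)
    (L : Fin n → Set (List α)) :
    (∀ (ι : Type*) (Kf : ι → Set (List α)),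
        (∀ a, Kf a ⊆ SyncProd A L) → (∀ a, PrefixClosed (Kf a)) →
        (∀ a, TwoLevelCC A g Akj L Au (Kf a)) →
        TwoLevelCC A g Akj L Au (⋃ a, Kf a)) ∧
    (∀ K : Set (List α), K ⊆ SyncProd A L → PrefixClosed K →
        supTwoCC A g Akj L Au K ⊆ K ∧
        TwoLevelCC A g Akj L Au (supTwoCC A g Akj L Au K) ∧
        ∀ K' : Set (List α), K' ⊆ K → PrefixClosed K' →
          TwoLevelCC A g Akj L Au K' → K' ⊆ supTwoCC A g Akj L Au K) := by
  refine ⟨fun ι Kf hKL _ hK => TwoLevelCC.iUnion hKL hK, fun K hKL _ => ⟨?_, ?_, ?_⟩⟩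
  · exact Set.sUnion_subset fun K' hK' => hK'.1
  · rw [supTwoCC, Set.sUnion_eq_iUnion]
    exact TwoLevelCC.iUnion (fun K' => K'.2.1.trans hKL) fun K' => K'.2.2.2
  · exact fun K' hK'K hK'pc hK' => Set.subset_sUnion_of_mem ⟨hK'K, hK'pc, hK'⟩

/-- Two-level conditional controllability is closed under arbitrary
unions; consequently the supremal two-level conditionally controllable
sublanguage of any prefix-closed `K ⊆ ‖ L i` exists (it is the union of all
two-level conditionally controllable sublanguages of `K`). -/
theorem stmt_9 (n m : ℕ) (A : Fin n → Set α) (g : Fin n → Fin m)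
    (Ak : Set α) (Akj : Fin m → Set α) (Au : Set α)
    (L : Fin n → Set (List α))
    (hLW : ∀ i, L i ⊆ Words (A i)) (hLpc : ∀ i, PrefixClosed (L i))
    (hAu : Au ⊆ ⋃ i, A i)
    (hAk : ∀ r ℓ : Fin m, r ≠ ℓ →
      (⋃ i ∈ {i | g i = r}, A i) ∩ (⋃ i ∈ {i | g i = ℓ}, A i) ⊆ Ak)
    (hAkA : Ak ⊆ ⋃ i, A i)
    (hAkAkj : ∀ j, Ak ⊆ Akj j)
    (hAkj : ∀ i i' : Fin n, i ≠ i' → g i = g i' → A i ∩ A i' ⊆ Akj (g i))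
    (hAkjA : ∀ j, Akj j ⊆ ⋃ i, A i) :
    (∀ (ι : Type*) (Kf : ι → Set (List α)),
        (∀ a, Kf a ⊆ SyncProd A L) → (∀ a, PrefixClosed (Kf a)) →
        (∀ a, TwoLevelCC A g Akj L Au (Kf a)) →
        TwoLevelCC A g Akj L Au (⋃ a, Kf a)) ∧
    (∀ K : Set (List α), K ⊆ SyncProd A L → PrefixClosed K →
        supTwoCC A g Akj L Au K ⊆ K ∧
        TwoLevelCC A g Akj L Au (supTwoCC A g Akj L Au K) ∧
        ∀ K' : Set (List α), K' ⊆ K → PrefixClosed K' →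
          TwoLevelCC A g Akj L Au K' → K' ⊆ supTwoCC A g Akj L Au K) :=
  stmt_9_general n m A g Akj Au L
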